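/- Fix M>0 and N∈ℕ. For every strongly measurable r:[0,T]→V with sup_{t∈[0,T]}‖i(r_t)‖_H ≤ M and every g∈S^N such that (s,z)↦f(s,r_s,z)·(g(s,z)−1) is Bochner integrable with respect to ν_T, define y_t = ∫_0^t ∫_𝕏 f(s,r_s,z)·(g(s,z)−1) ν(dz) ds ∈ H for t∈[0,T]. Then: (i) for all 0≤s≤t≤T, ‖y_t−y_s‖_H ≤ (M+1)·sup_{φ∈S^N} ∫_s^t ∫_𝕏 L_f(l,z)·|φ(l,z)−1| ν(dz) dl; (ii) sup over all such (r,g) and all t∈[0,T] of ‖y_t‖_H is at most (M+1)·sup_{φ∈S^N} ∫_{𝕏_T} L_f·|φ−1| dν_T, which is finite; (iii) for every η>0 there exists ϖ>0, independent of r and g, such that ‖y_t−y_s‖_H ≤ η whenever s,t∈[0,T] with |t−s|≤ϖ. -/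

import Mathlib

/-!
Everything rests on the pointwise bound `‖(g - 1) • f(l, r_l, z)‖ ≤ (M + 1) L_f |g - 1|`: (i) is
then the triangle inequality for the Bochner integral, and (ii), (iii) reduce to the uniform
integrability of `{L_f |φ - 1| : φ ∈ S^N}` over time slabs `[s, t] × 𝕏`. For that, split
`L_f |φ - 1|` according to the sizes of `φ` and `L_f`. Where `φ ≤ e^b`,
`|φ - 1| ≤ (e^{b/2} + 1) |√φ - 1|` and `(√φ - 1)² ≤ l(φ)`, so Cauchy–Schwarz against `L_f ∈ L²`
applies. Where `φ > e^b` and `L_f ≤ σ/δ`, `l(φ) ≥ (b - 1) φ`. Where `φ > e^b` and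
`L_f > σ/δ ≥ 1`, the Young inequality `φ y ≤ e^y + l(φ)` with `y = σ L_f ≤ δ L_f²` brings in the
integrability of `exp (δ L_f²)` on the finite-measure set `{L_f > 1}`. The last two pieces are
`O(1/σ)` and `O(σ/b)` uniformly in `φ ∈ S^N`, and the first is small on thin slabs by absolute
continuity of `∫ L_f²`.
-/

open MeasureTheory Real Filter Topology InformationTheory
open scoped ENNReal

lemma sq_sqrt_sub_one_le_klFun {x : ℝ} (hx : 0 ≤ x) : (√x - 1) ^ 2 ≤ klFun x := by
  rcases hx.eq_or_lt with rfl | hx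
  · simp [klFun_zero]
  have hs : 0 < √x := sqrt_pos.2 hx
  have hlog : log x = 2 * log √x := by rw [log_sqrt hx.le]; ring
  have h := one_sub_inv_le_log_of_pos hs
  have hsq : √x * √x = x := mul_self_sqrt hx.le
  have : 2 * x * (1 - (√x)⁻¹) = 2 * x - 2 * √x := by field_simp; nlinarith
  rw [klFun_apply, hlog]
  nlinarith [mul_le_mul_of_nonneg_left h (by positivity : (0:ℝ) ≤ 2 * x)]

lemma mul_le_exp_add_klFun {x : ℝ} (y : ℝ) (hx : 0 ≤ x) : x * y ≤ exp y + klFun x := by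
  rcases hx.eq_or_lt with rfl | hx
  · simp [klFun_zero]; positivity
  have h := add_one_le_exp (y - log x)
  rw [exp_sub, exp_log hx, le_div_iff₀ hx] at h
  rw [klFun_apply]
  nlinarith

lemma mul_sub_one_le_klFun {b x : ℝ} (hx : exp b ≤ x) : x * (b - 1) ≤ klFun x := by
  have hx0 : 0 < x := (exp_pos b).trans_le hx
  have : b ≤ log x := by rwa [le_log_iff_exp_le hx0]
  rw [klFun_apply]
  nlinarith

lemma abs_sub_one_le_of_le_exp {b x : ℝ} (hx : 0 ≤ x) (hxb : x ≤ exp b) :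
    |x - 1| ≤ (exp (b / 2) + 1) * |√x - 1| := by
  have hsx : √x ≤ exp (b / 2) := by
    rw [show exp (b / 2) = √(exp b) by rw [sqrt_eq_rpow, ← exp_mul]; ring_nf]
    exact sqrt_le_sqrt hxb
  have : x - 1 = (√x + 1) * (√x - 1) := by ring_nf; rw [sq_sqrt hx]
  rw [this, abs_mul, abs_of_nonneg (by positivity : 0 ≤ √x + 1)]
  gcongr

lemma mul_abs_sub_one_le {a x δ σ b : ℝ} (ha : 0 ≤ a) (hx : 0 ≤ x) (hδ : 0 < δ) (hδσ : δ ≤ σ)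
    (hb : 1 < b) :
    a * |x - 1| ≤ (exp (b / 2) + 1) * (a * |√x - 1|) + σ / (δ * (b - 1)) * klFun x
      + σ⁻¹ * ((if 1 < a then exp (δ * a ^ 2) else 0) + klFun x) := by
  have hσ : 0 < σ := hδ.trans_le hδσ
  have hb1 : 0 < b - 1 := sub_pos.2 hb
  have hkl := klFun_nonneg hx
  have hexp : 0 ≤ if 1 < a then exp (δ * a ^ 2) else 0 := by split_ifs <;> positivity
  have hfirst : 0 ≤ (exp (b / 2) + 1) * (a * |√x - 1|) := by positivity
  have hmid : 0 ≤ σ / (δ * (b - 1)) * klFun x := by positivity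
  have htail : 0 ≤ σ⁻¹ * ((if 1 < a then exp (δ * a ^ 2) else 0) + klFun x) := by positivity
  rcases le_or_gt x (exp b) with hxb | hxb
  · have := mul_le_mul_of_nonneg_left (abs_sub_one_le_of_le_exp hx hxb) ha
    linarith
  have hx1 : |x - 1| ≤ x := by
    rw [abs_of_nonneg (by linarith [add_one_le_exp b])]; linarith
  refine (mul_le_mul_of_nonneg_left hx1 ha).trans ?_
  rcases le_or_gt a (σ / δ) with haσ | haσ
  · have : a * x ≤ σ / (δ * (b - 1)) * klFun x :=
      calc a * x ≤ σ / δ * x := by gcongr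
        _ = σ / (δ * (b - 1)) * (x * (b - 1)) := by field_simp
        _ ≤ σ / (δ * (b - 1)) * klFun x := by gcongr; exact mul_sub_one_le_klFun hxb.le
    linarith
  · have ha1 : 1 < a := (one_le_div hδ |>.2 hδσ).trans_lt haσ
    have hσa : σ * a ≤ δ * a ^ 2 := by
      rw [div_lt_iff₀ hδ] at haσ; nlinarith
    have : a * x ≤ σ⁻¹ * (exp (δ * a ^ 2) + klFun x) :=
      calc a * x = σ⁻¹ * (x * (σ * a)) := by field_simp
        _ ≤ σ⁻¹ * (exp (σ * a) + klFun x) := by gcongr; exact mul_le_exp_add_klFun _ hx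
        _ ≤ σ⁻¹ * (exp (δ * a ^ 2) + klFun x) := by gcongr
    rw [if_pos ha1]
    linarith

section Entropy

variable {α : Type*} [MeasurableSpace α] {μ : Measure α} {L φ : α → ℝ}

lemma lintegral_mul_abs_sqrt_sub_one_le (hL : Measurable L) (hL0 : ∀ q, 0 ≤ L q) (hφ : Measurable φ)
    (hφ0 : ∀ q, 0 ≤ φ q) (S : Set α) :
    ∫⁻ q in S, ENNReal.ofReal (L q) * ENNReal.ofReal |√(φ q) - 1| ∂μ ≤
      (∫⁻ q in S, ENNReal.ofReal (L q ^ 2) ∂μ) ^ (1 / 2 : ℝ) *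
        (∫⁻ q, ENNReal.ofReal (klFun (φ q)) ∂μ) ^ (1 / 2 : ℝ) := by
  have hsq : ∀ y : ℝ, 0 ≤ y → ENNReal.ofReal y ^ (2 : ℝ) = ENNReal.ofReal (y ^ 2) := fun y hy => by
    rw [ENNReal.ofReal_rpow_of_nonneg hy (by norm_num), rpow_two]
  refine (ENNReal.lintegral_mul_le_Lp_mul_Lq _ HolderConjugate.two_two
    (by fun_prop) (by fun_prop)).trans ?_
  gcongr ?_ ^ _ * ?_ ^ _
  · exact (lintegral_congr fun q => hsq _ (hL0 q)).le
  · calc ∫⁻ q in S, ENNReal.ofReal |√(φ q) - 1| ^ (2 : ℝ) ∂μ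
        ≤ ∫⁻ q in S, ENNReal.ofReal (klFun (φ q)) ∂μ := lintegral_mono fun q => by
          rw [hsq _ (abs_nonneg _), sq_abs]
          exact ENNReal.ofReal_le_ofReal (sq_sqrt_sub_one_le_klFun (hφ0 q))
      _ ≤ ∫⁻ q, ENNReal.ofReal (klFun (φ q)) ∂μ := setLIntegral_le_lintegral _ _

lemma lintegral_mul_abs_sub_one_le (hL : Measurable L) (hL0 : ∀ q, 0 ≤ L q) (hφ : Measurable φ)
    (hφ0 : ∀ q, 0 ≤ φ q) {δ σ b : ℝ} (hδ : 0 < δ) (hδσ : δ ≤ σ) (hb : 1 < b) (S : Set α) :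
    ∫⁻ q in S, ENNReal.ofReal (L q * |φ q - 1|) ∂μ ≤
      ENNReal.ofReal (exp (b / 2) + 1) * ((∫⁻ q in S, ENNReal.ofReal (L q ^ 2) ∂μ) ^ (1 / 2 : ℝ) *
          (∫⁻ q, ENNReal.ofReal (klFun (φ q)) ∂μ) ^ (1 / 2 : ℝ))
        + ENNReal.ofReal (σ / (δ * (b - 1))) * ∫⁻ q, ENNReal.ofReal (klFun (φ q)) ∂μ
        + ENNReal.ofReal σ⁻¹ * (∫⁻ q in {q | 1 < L q}, ENNReal.ofReal (exp (δ * L q ^ 2)) ∂μ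
          + ∫⁻ q, ENNReal.ofReal (klFun (φ q)) ∂μ) := by
  have hσ : 0 < σ := hδ.trans_le hδσ
  have hb1 : 0 < b - 1 := sub_pos.2 hb
  have hΓ : MeasurableSet {q | 1 < L q} := measurableSet_lt measurable_const hL
  set E : α → ℝ≥0∞ := {q | 1 < L q}.indicator fun q => ENNReal.ofReal (exp (δ * L q ^ 2))
  have hE : Measurable E :=
    (by fun_prop : Measurable fun q => ENNReal.ofReal (exp (δ * L q ^ 2))).indicator hΓ
  have hpt : ∀ q, ENNReal.ofReal (L q * |φ q - 1|) ≤
      ENNReal.ofReal (exp (b / 2) + 1) * (ENNReal.ofReal (L q) * ENNReal.ofReal |√(φ q) - 1|)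
        + ENNReal.ofReal (σ / (δ * (b - 1))) * ENNReal.ofReal (klFun (φ q))
        + ENNReal.ofReal σ⁻¹ * (E q + ENNReal.ofReal (klFun (φ q))) := fun q => by
    have key := mul_abs_sub_one_le (hL0 q) (hφ0 q) hδ hδσ hb
    have hEq : E q = ENNReal.ofReal (if 1 < L q then exp (δ * L q ^ 2) else 0) := by
      by_cases h : 1 < L q <;> simp [E, h]
    have hexp : 0 ≤ if 1 < L q then exp (δ * L q ^ 2) else 0 := by split_ifs <;> positivity
    have hkl := klFun_nonneg (hφ0 q)
    rw [hEq]
    generalize (if 1 < L q then exp (δ * L q ^ 2) else 0) = e at key hexp ⊢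
    generalize klFun (φ q) = k at key hkl ⊢
    have := hL0 q
    rw [← ENNReal.ofReal_mul (by positivity), ← ENNReal.ofReal_mul (by positivity),
      ← ENNReal.ofReal_mul (by positivity), ← ENNReal.ofReal_add hexp hkl,
      ← ENNReal.ofReal_mul (by positivity), ← ENNReal.ofReal_add (by positivity) (by positivity),
      ← ENNReal.ofReal_add (by positivity) (by positivity)]
    exact ENNReal.ofReal_le_ofReal key
  calc ∫⁻ q in S, ENNReal.ofReal (L q * |φ q - 1|) ∂μ
      ≤ ∫⁻ q in S, (ENNReal.ofReal (exp (b / 2) + 1) *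
            (ENNReal.ofReal (L q) * ENNReal.ofReal |√(φ q) - 1|)
          + ENNReal.ofReal (σ / (δ * (b - 1))) * ENNReal.ofReal (klFun (φ q))
          + ENNReal.ofReal σ⁻¹ * (E q + ENNReal.ofReal (klFun (φ q)))) ∂μ := lintegral_mono hpt
    _ = ENNReal.ofReal (exp (b / 2) + 1) *
            ∫⁻ q in S, ENNReal.ofReal (L q) * ENNReal.ofReal |√(φ q) - 1| ∂μ
          + ENNReal.ofReal (σ / (δ * (b - 1))) * ∫⁻ q in S, ENNReal.ofReal (klFun (φ q)) ∂μ
          + ENNReal.ofReal σ⁻¹ * (∫⁻ q in S, E q ∂μ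
            + ∫⁻ q in S, ENNReal.ofReal (klFun (φ q)) ∂μ) := by
      rw [lintegral_add_left (by fun_prop), lintegral_add_left (by fun_prop),
        lintegral_const_mul _ (by fun_prop), lintegral_const_mul _ (by fun_prop),
        lintegral_const_mul _ (by fun_prop), lintegral_add_left hE]
    _ ≤ _ := by
      gcongr _ * ?_ + _ * ?_ + _ * (?_ + ?_)
      · exact lintegral_mul_abs_sqrt_sub_one_le hL hL0 hφ hφ0 S
      · exact setLIntegral_le_lintegral _ _
      · exact (setLIntegral_le_lintegral _ _).trans (lintegral_indicator hΓ _).le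
      · exact setLIntegral_le_lintegral _ _

/-- The paper's `S^N`; Mathlib's `klFun` is its `l(r) = r log r - r + 1`. -/
def klSublevel (μ : Measure α) (N : ℝ≥0∞) : Set (α → ℝ) :=
  {φ | Measurable φ ∧ (∀ q, 0 ≤ φ q) ∧ ∫⁻ q, ENNReal.ofReal (klFun (φ q)) ∂μ ≤ N}

variable {δ : ℝ} {N : ℝ≥0∞}

lemma exists_lintegral_mul_abs_sub_one_le (hL : Measurable L) (hL0 : ∀ q, 0 ≤ L q)
    (hL2 : ∫⁻ q, ENNReal.ofReal (L q ^ 2) ∂μ ≠ ⊤) (hδ : 0 < δ)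
    (hE : ∫⁻ q in {q | 1 < L q}, ENNReal.ofReal (exp (δ * L q ^ 2)) ∂μ ≠ ⊤) (hN : N ≠ ⊤) :
    ∃ B ≠ ⊤, ∀ φ ∈ klSublevel μ N, ∫⁻ q, ENNReal.ofReal (L q * |φ q - 1|) ∂μ ≤ B := by
  refine ⟨ENNReal.ofReal (exp (2 / 2) + 1) *
      ((∫⁻ q, ENNReal.ofReal (L q ^ 2) ∂μ) ^ (1 / 2 : ℝ) * N ^ (1 / 2 : ℝ))
      + ENNReal.ofReal (δ / (δ * (2 - 1))) * N
      + ENNReal.ofReal δ⁻¹ * (∫⁻ q in {q | 1 < L q}, ENNReal.ofReal (exp (δ * L q ^ 2)) ∂μ + N),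
    by finiteness, fun φ ⟨hφ, hφ0, hφN⟩ => ?_⟩
  have h := lintegral_mul_abs_sub_one_le (μ := μ) hL hL0 hφ hφ0 hδ le_rfl one_lt_two Set.univ
  rw [Measure.restrict_univ] at h
  exact h.trans (by gcongr)

lemma exists_pos_lintegral_mul_abs_sub_one_le (hL : Measurable L) (hL0 : ∀ q, 0 ≤ L q)
    (hδ : 0 < δ) (hE : ∫⁻ q in {q | 1 < L q}, ENNReal.ofReal (exp (δ * L q ^ 2)) ∂μ ≠ ⊤)
    (hN : N ≠ ⊤) {ε : ℝ≥0∞} (hε : 0 < ε) :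
    ∃ η > 0, ∀ S : Set α, ∫⁻ q in S, ENNReal.ofReal (L q ^ 2) ∂μ < η →
      ∀ φ ∈ klSublevel μ N, ∫⁻ q in S, ENNReal.ofReal (L q * |φ q - 1|) ∂μ ≤ ε := by
  set E := ∫⁻ q in {q | 1 < L q}, ENNReal.ofReal (exp (δ * L q ^ 2)) ∂μ
  have hε3 : 0 < ε / 3 := ENNReal.div_pos hε.ne' (by norm_num)
  obtain ⟨σ, hσε, hδσ⟩ : ∃ σ : ℝ, ENNReal.ofReal σ⁻¹ * (E + N) < ε / 3 ∧ δ ≤ σ := by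
    have h : Tendsto (fun σ : ℝ => ENNReal.ofReal σ⁻¹ * (E + N)) atTop (𝓝 0) := by
      simpa using ENNReal.Tendsto.mul_const (ENNReal.tendsto_ofReal tendsto_inv_atTop_zero)
        (Or.inr (by finiteness : E + N ≠ ⊤))
    exact ((h.eventually (gt_mem_nhds hε3)).and (eventually_ge_atTop δ)).exists
  obtain ⟨b, hbε, hb⟩ : ∃ b : ℝ, ENNReal.ofReal (σ / (δ * (b - 1))) * N < ε / 3 ∧ 1 < b := by
    have h : Tendsto (fun b : ℝ => ENNReal.ofReal (σ / (δ * (b - 1))) * N) atTop (𝓝 0) := by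
      simpa [sub_eq_add_neg] using ENNReal.Tendsto.mul_const
        (ENNReal.tendsto_ofReal (tendsto_const_nhds.div_atTop
          ((tendsto_atTop_add_const_right atTop (-1) tendsto_id).const_mul_atTop hδ))) (Or.inr hN)
    exact ((h.eventually (gt_mem_nhds hε3)).and (eventually_gt_atTop 1)).exists
  obtain ⟨η, hη, hηε⟩ : ∃ η > 0, ∀ x < η,
      ENNReal.ofReal (exp (b / 2) + 1) * (x ^ (1 / 2 : ℝ) * N ^ (1 / 2 : ℝ)) < ε / 3 := by
    have h : Tendsto (fun x : ℝ≥0∞ => ENNReal.ofReal (exp (b / 2) + 1) *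
        (x ^ (1 / 2 : ℝ) * N ^ (1 / 2 : ℝ))) (𝓝 0) (𝓝 0) := by
      simpa using ENNReal.Tendsto.const_mul (ENNReal.Tendsto.mul_const
        ((ENNReal.continuous_rpow_const (y := 1 / 2)).tendsto 0)
        (Or.inr (by finiteness : N ^ (1 / 2 : ℝ) ≠ ⊤))) (Or.inr ENNReal.ofReal_ne_top)
    exact ENNReal.nhds_zero_basis.eventually_iff.1 (h.eventually (gt_mem_nhds hε3))
  refine ⟨η, hη, fun S hS φ ⟨hφ, hφ0, hφN⟩ => ?_⟩
  calc ∫⁻ q in S, ENNReal.ofReal (L q * |φ q - 1|) ∂μ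
      ≤ ENNReal.ofReal (exp (b / 2) + 1) *
            ((∫⁻ q in S, ENNReal.ofReal (L q ^ 2) ∂μ) ^ (1 / 2 : ℝ) * N ^ (1 / 2 : ℝ))
          + ENNReal.ofReal (σ / (δ * (b - 1))) * N + ENNReal.ofReal σ⁻¹ * (E + N) := by
        refine (lintegral_mul_abs_sub_one_le hL hL0 hφ hφ0 hδ hδσ hb S).trans ?_
        gcongr
    _ ≤ ε / 3 + ε / 3 + ε / 3 := add_le_add (add_le_add (hηε _ hS).le hbε.le) hσε.le
    _ = ε := ENNReal.add_thirds ε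

lemma measure_one_lt_le_lintegral_sq (hL : Measurable L) :
    μ {q | 1 < L q} ≤ ∫⁻ q, ENNReal.ofReal (L q ^ 2) ∂μ := by
  refine (measure_mono fun q (hq : 1 < L q) => ?_).trans
    (by simpa using mul_meas_ge_le_lintegral₀ (μ := μ) (by fun_prop : AEMeasurable
      (fun q => ENNReal.ofReal (L q ^ 2)) μ) 1)
  simpa using one_le_pow₀ (n := 2) hq.le

end Entropy

section Product

variable {α β : Type*} [MeasurableSpace α] [MeasurableSpace β] {μ : Measure α} {ν : Measure β}
  [SFinite μ] [SFinite ν]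

lemma restrict_prod_univ (A : Set α) :
    (μ.prod ν).restrict (A ×ˢ Set.univ) = (μ.restrict A).prod ν := by
  rw [← Measure.prod_restrict, Measure.restrict_univ]

lemma enorm_setIntegral_integral_le_setLIntegral_prod {E : Type*} [NormedAddCommGroup E]
    [NormedSpace ℝ E] {G : α × β → E} (hG : AEStronglyMeasurable G (μ.prod ν)) (A : Set α) :
    ‖∫ a in A, ∫ b, G (a, b) ∂ν ∂μ‖ₑ ≤ ∫⁻ q in A ×ˢ Set.univ, ‖G q‖ₑ ∂μ.prod ν := by
  calc ‖∫ a in A, ∫ b, G (a, b) ∂ν ∂μ‖ₑ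
      ≤ ∫⁻ a in A, ‖∫ b, G (a, b) ∂ν‖ₑ ∂μ := enorm_integral_le_lintegral_enorm _
    _ ≤ ∫⁻ a in A, ∫⁻ b, ‖G (a, b)‖ₑ ∂ν ∂μ :=
        lintegral_mono fun a => enorm_integral_le_lintegral_enorm _
    _ = ∫⁻ q in A ×ˢ Set.univ, ‖G q‖ₑ ∂μ.prod ν := by
        rw [restrict_prod_univ,
          lintegral_prod _ (restrict_prod_univ (μ := μ) (ν := ν) A ▸ hG.enorm.restrict)]

lemma exists_pos_setLIntegral_prod_univ_lt {F : α × β → ℝ≥0∞} (hF : Measurable F)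
    (hF' : ∫⁻ q, F q ∂μ.prod ν ≠ ⊤) {ε : ℝ≥0∞} (hε : ε ≠ 0) :
    ∃ η > 0, ∀ A : Set α, μ A < η → ∫⁻ q in A ×ˢ Set.univ, F q ∂μ.prod ν < ε := by
  rw [lintegral_prod _ hF.aemeasurable] at hF'
  obtain ⟨η, hη, h⟩ := exists_pos_setLIntegral_lt_of_measure_lt hF' hε
  exact ⟨η, hη, fun A hA => by
    rw [restrict_prod_univ, lintegral_prod _ hF.aemeasurable]; exact h A hA⟩

end Product

section Time

variable {𝕏 : Type*} [MeasurableSpace 𝕏] {ν : Measure 𝕏} [SFinite ν] {T : ℝ}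
  {E : Type*} [NormedAddCommGroup E] [NormedSpace ℝ E]

lemma enorm_integral_Icc_sub_le {G : ℝ × 𝕏 → E}
    (hG : Integrable G ((volume.restrict (Set.Icc 0 T)).prod ν)) {s t : ℝ}
    (hs : 0 ≤ s) (hst : s ≤ t) (htT : t ≤ T) :
    ‖(∫ l in Set.Icc 0 t, ∫ z, G (l, z) ∂ν) - ∫ l in Set.Icc 0 s, ∫ z, G (l, z) ∂ν‖ₑ ≤
      ∫⁻ q in Set.Icc s t ×ˢ Set.univ, ‖G q‖ₑ ∂(volume.restrict (Set.Icc 0 T)).prod ν := by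
  have hF : IntegrableOn (fun l => ∫ z, G (l, z) ∂ν) (Set.Icc 0 T) := hG.integral_prod_left
  have hsub : (∫ l in Set.Icc 0 t, ∫ z, G (l, z) ∂ν) - ∫ l in Set.Icc 0 s, ∫ z, G (l, z) ∂ν =
      ∫ l in Set.Icc s t, ∫ z, G (l, z) ∂ν ∂volume.restrict (Set.Icc 0 T) := by
    rw [Measure.restrict_restrict measurableSet_Icc,
      Set.inter_eq_left.2 (Set.Icc_subset_Icc hs htT), integral_Icc_eq_integral_Ioc (x := s),
      ← Set.Icc_union_Ioc_eq_Icc hs hst,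
      setIntegral_union (Set.disjoint_left.2 fun _ hx hx' => hx'.1.not_ge hx.2) measurableSet_Ioc
        (hF.mono_set (Set.Icc_subset_Icc le_rfl (hst.trans htT)))
        (hF.mono_set fun x hx => ⟨hs.trans hx.1.le, hx.2.trans htT⟩)]
    abel
  rw [hsub]
  exact enorm_setIntegral_integral_le_setLIntegral_prod hG.aestronglyMeasurable _

lemma ofReal_norm_integral_Icc_sub_le {V : Type*} {f : ℝ → V → 𝕏 → E} {Lf : ℝ × 𝕏 → ℝ}
    (hLf0 : ∀ q, 0 ≤ Lf q) (ρ : V → ℝ) (hfb : ∀ t v z, ‖f t v z‖ ≤ Lf (t, z) * (1 + ρ v))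
    {M : ℝ} {r : ℝ → V} (hrM : ∀ t ∈ Set.Icc 0 T, ρ (r t) ≤ M) {g : ℝ × 𝕏 → ℝ}
    (hint : Integrable (fun q : ℝ × 𝕏 => (g q - 1) • f q.1 (r q.1) q.2)
      ((volume.restrict (Set.Icc 0 T)).prod ν)) {s t : ℝ}
    (hs : 0 ≤ s) (hst : s ≤ t) (htT : t ≤ T) :
    ENNReal.ofReal ‖(∫ l in Set.Icc 0 t, ∫ z, (g (l, z) - 1) • f l (r l) z ∂ν)
        - ∫ l in Set.Icc 0 s, ∫ z, (g (l, z) - 1) • f l (r l) z ∂ν‖ ≤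
      ENNReal.ofReal (M + 1) * ∫⁻ q in Set.Icc s t ×ˢ Set.univ,
        ENNReal.ofReal (Lf q * |g q - 1|) ∂(volume.restrict (Set.Icc 0 T)).prod ν := by
  rw [ofReal_norm, ← lintegral_const_mul' _ _ ENNReal.ofReal_ne_top]
  refine (enorm_integral_Icc_sub_le hint hs hst htT).trans
    (setLIntegral_mono' (measurableSet_Icc.prod .univ) fun q hq => ?_)
  have hρ := hrM q.1 ⟨hs.trans hq.1.1, hq.1.2.trans htT⟩
  rw [← ofReal_norm, ← ENNReal.ofReal_mul' (mul_nonneg (hLf0 q) (abs_nonneg _)), norm_smul,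
    Real.norm_eq_abs]
  refine ENNReal.ofReal_le_ofReal ?_
  calc |g q - 1| * ‖f q.1 (r q.1) q.2‖ ≤ |g q - 1| * (Lf q * (1 + M)) := by
        gcongr
        exact (hfb _ _ _).trans (by gcongr; exact hLf0 q)
    _ = (M + 1) * (Lf q * |g q - 1|) := by ring

lemma exists_pos_setLIntegral_Icc_prod_lt {F : ℝ × 𝕏 → ℝ≥0∞} (hF : Measurable F)
    (hF' : ∫⁻ q, F q ∂(volume.restrict (Set.Icc 0 T)).prod ν ≠ ⊤) {ε : ℝ≥0∞} (hε : ε ≠ 0) :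
    ∃ ϖ > 0, ∀ s t : ℝ, t - s ≤ ϖ →
      ∫⁻ q in Set.Icc s t ×ˢ Set.univ, F q ∂(volume.restrict (Set.Icc 0 T)).prod ν < ε := by
  obtain ⟨η, hη, h⟩ := exists_pos_setLIntegral_prod_univ_lt hF hF' hε
  obtain ⟨ϖ, -, hϖ, hϖη⟩ := ENNReal.lt_iff_exists_real_btwn.1 hη
  refine ⟨ϖ, ENNReal.ofReal_pos.1 hϖ, fun s t hst => h _ ?_⟩
  calc volume.restrict (Set.Icc 0 T) (Set.Icc s t) ≤ volume (Set.Icc s t) :=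
        Measure.restrict_le_self _
    _ = ENNReal.ofReal (t - s) := Real.volume_Icc
    _ < η := (ENNReal.ofReal_le_ofReal hst).trans_lt hϖη

lemma exists_pos_iSup_setLIntegral_Icc_prod_le {L : ℝ × 𝕏 → ℝ} (hL : Measurable L)
    (hL0 : ∀ q, 0 ≤ L q)
    (hL2 : ∫⁻ q, ENNReal.ofReal (L q ^ 2) ∂(volume.restrict (Set.Icc 0 T)).prod ν ≠ ⊤)
    {δ : ℝ} (hδ : 0 < δ) (hE : ∫⁻ q in {q | 1 < L q}, ENNReal.ofReal (exp (δ * L q ^ 2))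
      ∂(volume.restrict (Set.Icc 0 T)).prod ν ≠ ⊤) {N : ℝ≥0∞} (hN : N ≠ ⊤)
    {ε : ℝ≥0∞} (hε : 0 < ε) :
    ∃ ϖ > 0, ∀ s t : ℝ, t - s ≤ ϖ →
      ⨆ φ ∈ klSublevel ((volume.restrict (Set.Icc 0 T)).prod ν) N,
        ∫⁻ q in Set.Icc s t ×ˢ Set.univ, ENNReal.ofReal (L q * |φ q - 1|)
          ∂(volume.restrict (Set.Icc 0 T)).prod ν ≤ ε := by
  obtain ⟨η, hη, hsmall⟩ := exists_pos_lintegral_mul_abs_sub_one_le hL hL0 hδ hE hN hε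
  obtain ⟨ϖ, hϖ, hslab⟩ := exists_pos_setLIntegral_Icc_prod_lt (by fun_prop) hL2 hη.ne'
  exact ⟨ϖ, hϖ, fun s t hst => iSup₂_le (hsmall _ (hslab s t hst))⟩

end Time

lemma exists_pos_norm_sub_le_of_modulus {E : Type*} [NormedAddCommGroup E] {T K : ℝ} (hK : 0 < K)
    {w : ℝ → ℝ → ℝ≥0∞} (hw : ∀ ε : ℝ≥0∞, 0 < ε → ∃ ϖ > 0, ∀ s t : ℝ, t - s ≤ ϖ → w s t ≤ ε)
    {η : ℝ} (hη : 0 < η) :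
    ∃ ϖ > 0, ∀ y : ℝ → E,
      (∀ s t : ℝ, 0 ≤ s → s ≤ t → t ≤ T → ENNReal.ofReal ‖y t - y s‖ ≤ ENNReal.ofReal K * w s t) →
      ∀ s t : ℝ, s ∈ Set.Icc 0 T → t ∈ Set.Icc 0 T → |t - s| ≤ ϖ → ‖y t - y s‖ ≤ η := by
  obtain ⟨ϖ, hϖ, hwϖ⟩ := hw (ENNReal.ofReal (η / K)) (by simpa using div_pos hη hK)
  refine ⟨ϖ, hϖ, fun y hy s t hs ht hst => ?_⟩
  wlog hle : s ≤ t generalizing s t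
  · rw [norm_sub_rev]; exact this t s ht hs (by rwa [abs_sub_comm]) (le_of_not_ge hle)
  rw [← ENNReal.ofReal_le_ofReal_iff hη.le]
  calc ENNReal.ofReal ‖y t - y s‖ ≤ ENNReal.ofReal K * w s t := hy s t hs.1 hle ht.2
    _ ≤ ENNReal.ofReal K * ENNReal.ofReal (η / K) := by
        gcongr; exact hwϖ s t ((le_abs_self _).trans hst)
    _ = ENNReal.ofReal η := by rw [← ENNReal.ofReal_mul hK.le, mul_div_cancel₀ _ hK.ne']

theorem stmt_12_general
    {𝕏 : Type*} [MeasurableSpace 𝕏]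
    {H : Type*} [NormedAddCommGroup H] [InnerProductSpace ℝ H]
    {V : Type*} [NormedAddCommGroup V] [NormedSpace ℝ V]
    (T : ℝ) (ν : Measure 𝕏) [SigmaFinite ν]
    (νT : Measure (ℝ × 𝕏)) (hνT : νT = (volume.restrict (Set.Icc 0 T)).prod ν)
    (i : V →L[ℝ] H) (f : ℝ → V → 𝕏 → H)
    (Lf : ℝ × 𝕏 → ℝ) (hLfm : Measurable Lf) (hLfnn : ∀ q, 0 ≤ Lf q)
    (hLfint : ∫⁻ q, ENNReal.ofReal (Lf q ^ (2 : ℕ)) ∂νT < ⊤)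
    (hLfH : ∃ δ : ℝ, 0 < δ ∧ ∀ Γ : Set (ℝ × 𝕏), MeasurableSet Γ → νT Γ < ⊤ →
      ∫⁻ q in Γ, ENNReal.ofReal (Real.exp (δ * Lf q ^ (2 : ℝ))) ∂νT < ⊤)
    (hfb : ∀ (t : ℝ) (v : V) (z : 𝕏), ‖f t v z‖ ≤ Lf (t, z) * (1 + ‖i v‖))
    (M : ℝ) (hM : 0 < M) (N : ℕ)
    (SN : Set (ℝ × 𝕏 → ℝ))
    (hSN : SN = {g : ℝ × 𝕏 → ℝ | Measurable g ∧ (∀ q, 0 ≤ g q) ∧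
      ∫⁻ q, ENNReal.ofReal (g q * Real.log (g q) - g q + 1) ∂νT ≤ (N : ℝ≥0∞)}) :
    -- (i)
    (∀ r : ℝ → V, StronglyMeasurable r → (∀ t ∈ Set.Icc (0 : ℝ) T, ‖i (r t)‖ ≤ M) →
      ∀ g ∈ SN, Integrable (fun q : ℝ × 𝕏 => (g q - 1) • f q.1 (r q.1) q.2) νT →
      ∀ s t : ℝ, 0 ≤ s → s ≤ t → t ≤ T →
        ENNReal.ofReal
            ‖(∫ l in Set.Icc 0 t, ∫ z, (g (l, z) - 1) • f l (r l) z ∂ν)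
              - ∫ l in Set.Icc 0 s, ∫ z, (g (l, z) - 1) • f l (r l) z ∂ν‖
          ≤ ENNReal.ofReal (M + 1) *
            ⨆ φ ∈ SN, ∫⁻ q in Set.Icc s t ×ˢ (Set.univ : Set 𝕏),
              ENNReal.ofReal (Lf q * |φ q - 1|) ∂νT) ∧
    -- (ii)
    ((⨆ φ ∈ SN, ∫⁻ q, ENNReal.ofReal (Lf q * |φ q - 1|) ∂νT) < ⊤ ∧
      ∀ r : ℝ → V, StronglyMeasurable r → (∀ t ∈ Set.Icc (0 : ℝ) T, ‖i (r t)‖ ≤ M) →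
      ∀ g ∈ SN, Integrable (fun q : ℝ × 𝕏 => (g q - 1) • f q.1 (r q.1) q.2) νT →
      ∀ t ∈ Set.Icc (0 : ℝ) T,
        ENNReal.ofReal ‖∫ l in Set.Icc 0 t, ∫ z, (g (l, z) - 1) • f l (r l) z ∂ν‖
          ≤ ENNReal.ofReal (M + 1) *
            ⨆ φ ∈ SN, ∫⁻ q, ENNReal.ofReal (Lf q * |φ q - 1|) ∂νT) ∧
    -- (iii)
    (∀ η : ℝ, 0 < η → ∃ ϖ : ℝ, 0 < ϖ ∧
      ∀ r : ℝ → V, StronglyMeasurable r → (∀ t ∈ Set.Icc (0 : ℝ) T, ‖i (r t)‖ ≤ M) →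
      ∀ g ∈ SN, Integrable (fun q : ℝ × 𝕏 => (g q - 1) • f q.1 (r q.1) q.2) νT →
      ∀ s t : ℝ, s ∈ Set.Icc (0 : ℝ) T → t ∈ Set.Icc (0 : ℝ) T → |t - s| ≤ ϖ →
        ‖(∫ l in Set.Icc 0 t, ∫ z, (g (l, z) - 1) • f l (r l) z ∂ν)
            - ∫ l in Set.Icc 0 s, ∫ z, (g (l, z) - 1) • f l (r l) z ∂ν‖ ≤ η) := by
  obtain ⟨δ, hδ, hexp⟩ := hLfH
  subst hνT
  obtain rfl : SN = klSublevel ((volume.restrict (Set.Icc 0 T)).prod ν) N := by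
    simp only [hSN, klSublevel, klFun_apply, sub_add_eq_add_sub]
  have hE := hexp _ (measurableSet_lt measurable_const hLfm)
    ((measure_one_lt_le_lintegral_sq hLfm).trans_lt hLfint)
  simp only [rpow_two] at hE
  obtain ⟨B, hB, hφB⟩ := exists_lintegral_mul_abs_sub_one_le hLfm hLfnn hLfint.ne hδ hE.ne
    (ENNReal.natCast_ne_top N)
  refine ⟨fun r _ hrM g hg hint s t hs hst htT =>
    (ofReal_norm_integral_Icc_sub_le hLfnn _ hfb hrM hint hs hst htT).trans
      (by gcongr; exact le_iSup₂_of_le g hg le_rfl),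
    ⟨(iSup₂_le hφB).trans_lt hB.lt_top, fun r _ hrM g hg hint t ht => ?_⟩, fun η hη => ?_⟩
  · have h := ofReal_norm_integral_Icc_sub_le hLfnn _ hfb hrM hint (s := 0) le_rfl ht.1 ht.2
    rw [setIntegral_measure_zero (s := Set.Icc 0 0) _ (by simp), sub_zero] at h
    exact h.trans (by gcongr; exact le_iSup₂_of_le g hg (setLIntegral_le_lintegral _ _))
  · obtain ⟨ϖ, hϖ, h⟩ := exists_pos_norm_sub_le_of_modulus (E := H) (by linarith : 0 < M + 1)
      (fun ε hε => exists_pos_iSup_setLIntegral_Icc_prod_le hLfm hLfnn hLfint.ne hδ hE.ne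
        (ENNReal.natCast_ne_top N) hε) hη
    exact ⟨ϖ, hϖ, fun r _ hrM g hg hint => h _ fun s t hs hst htT =>
      (ofReal_norm_integral_Icc_sub_le hLfnn _ hfb hrM hint hs hst htT).trans
      (by gcongr; exact le_iSup₂_of_le g hg le_rfl)⟩

theorem stmt_12
    {𝕏 : Type*} [TopologicalSpace 𝕏] [PolishSpace 𝕏] [LocallyCompactSpace 𝕏]
    [MeasurableSpace 𝕏] [BorelSpace 𝕏]
    {H : Type*} [NormedAddCommGroup H] [InnerProductSpace ℝ H]
    [TopologicalSpace.SeparableSpace H] [MeasurableSpace H] [BorelSpace H]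
    {V : Type*} [NormedAddCommGroup V] [NormedSpace ℝ V]
    [TopologicalSpace.SeparableSpace V] [MeasurableSpace V] [BorelSpace V]
    (T : ℝ) (hT : 0 < T)
    (ν : Measure 𝕏) [SigmaFinite ν] (hνK : ∀ Kc : Set 𝕏, IsCompact Kc → ν Kc < ⊤)
    (νT : Measure (ℝ × 𝕏)) (hνT : νT = (volume.restrict (Set.Icc 0 T)).prod ν)
    (i : V →L[ℝ] H) (hiInj : Function.Injective i) (hiDense : DenseRange i)
    (f : ℝ → V → 𝕏 → H)
    (hfm : Measurable fun q : ℝ × V × 𝕏 => f q.1 q.2.1 q.2.2)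
    (Lf : ℝ × 𝕏 → ℝ) (hLfm : Measurable Lf) (hLfnn : ∀ q, 0 ≤ Lf q)
    (hLfint : ∫⁻ q, ENNReal.ofReal (Lf q ^ (2 : ℕ)) ∂νT < ⊤)
    (hLfH : ∃ δ : ℝ, 0 < δ ∧ ∀ Γ : Set (ℝ × 𝕏), MeasurableSet Γ → νT Γ < ⊤ →
      ∫⁻ q in Γ, ENNReal.ofReal (Real.exp (δ * Lf q ^ (2 : ℝ))) ∂νT < ⊤)
    (hfb : ∀ (t : ℝ) (v : V) (z : 𝕏), ‖f t v z‖ ≤ Lf (t, z) * (1 + ‖i v‖))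
    (M : ℝ) (hM : 0 < M) (N : ℕ)
    (SN : Set (ℝ × 𝕏 → ℝ))
    (hSN : SN = {g : ℝ × 𝕏 → ℝ | Measurable g ∧ (∀ q, 0 ≤ g q) ∧
      ∫⁻ q, ENNReal.ofReal (g q * Real.log (g q) - g q + 1) ∂νT ≤ (N : ℝ≥0∞)}) :
    -- (i)
    (∀ r : ℝ → V, StronglyMeasurable r → (∀ t ∈ Set.Icc (0 : ℝ) T, ‖i (r t)‖ ≤ M) →
      ∀ g ∈ SN, Integrable (fun q : ℝ × 𝕏 => (g q - 1) • f q.1 (r q.1) q.2) νT →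
      ∀ s t : ℝ, 0 ≤ s → s ≤ t → t ≤ T →
        ENNReal.ofReal
            ‖(∫ l in Set.Icc 0 t, ∫ z, (g (l, z) - 1) • f l (r l) z ∂ν)
              - ∫ l in Set.Icc 0 s, ∫ z, (g (l, z) - 1) • f l (r l) z ∂ν‖
          ≤ ENNReal.ofReal (M + 1) *
            ⨆ φ ∈ SN, ∫⁻ q in Set.Icc s t ×ˢ (Set.univ : Set 𝕏),
              ENNReal.ofReal (Lf q * |φ q - 1|) ∂νT) ∧
    -- (ii)
    ((⨆ φ ∈ SN, ∫⁻ q, ENNReal.ofReal (Lf q * |φ q - 1|) ∂νT) < ⊤ ∧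
      ∀ r : ℝ → V, StronglyMeasurable r → (∀ t ∈ Set.Icc (0 : ℝ) T, ‖i (r t)‖ ≤ M) →
      ∀ g ∈ SN, Integrable (fun q : ℝ × 𝕏 => (g q - 1) • f q.1 (r q.1) q.2) νT →
      ∀ t ∈ Set.Icc (0 : ℝ) T,
        ENNReal.ofReal ‖∫ l in Set.Icc 0 t, ∫ z, (g (l, z) - 1) • f l (r l) z ∂ν‖
          ≤ ENNReal.ofReal (M + 1) *
            ⨆ φ ∈ SN, ∫⁻ q, ENNReal.ofReal (Lf q * |φ q - 1|) ∂νT) ∧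
    -- (iii)
    (∀ η : ℝ, 0 < η → ∃ ϖ : ℝ, 0 < ϖ ∧
      ∀ r : ℝ → V, StronglyMeasurable r → (∀ t ∈ Set.Icc (0 : ℝ) T, ‖i (r t)‖ ≤ M) →
      ∀ g ∈ SN, Integrable (fun q : ℝ × 𝕏 => (g q - 1) • f q.1 (r q.1) q.2) νT →
      ∀ s t : ℝ, s ∈ Set.Icc (0 : ℝ) T → t ∈ Set.Icc (0 : ℝ) T → |t - s| ≤ ϖ →
        ‖(∫ l in Set.Icc 0 t, ∫ z, (g (l, z) - 1) • f l (r l) z ∂ν)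
            - ∫ l in Set.Icc 0 s, ∫ z, (g (l, z) - 1) • f l (r l) z ∂ν‖ ≤ η) :=
  stmt_12_general T ν νT hνT i f Lf hLfm hLfnn hLfint hLfH hfb M hM N SN hSN
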